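/- arXiv:2512.07047 — 2 statements merged into one kernel-verified Lean document; each statement's English description precedes it below -/
import Mathlib

section
/- (Equivariant Branching Lemma, one-dimensional fixed-space version.) Let Γ be a finite group acting on ℝⁿ through a representation ρ : Γ → GL(n, ℝ), and let F : ℝⁿ × ℝ → ℝⁿ be twice continuously differentiable and equivariant in the first variable: F(ρ(γ) x, μ) = ρ(γ) F(x, μ) for all γ ∈ Γ, x ∈ ℝⁿ, μ ∈ ℝ. Assume: (i) F(0, μ) = 0 for all μ; (ii) the derivative DₓF(0, 0) = 0; (iii) Σ is a subgroup of Γ whose fixed-point subspace Fix(Σ) = {x : ρ(σ)x = x for all σ ∈ Σ} is one-dimensional, spanned by a vector w ≠ 0; (iv) the crossing condition holds: the derivative with respect to μ at μ = 0 of the map μ ↦ DₓF(0, μ) w is nonzero. Then there exist δ > 0 and a continuously differentiable function μ : (−δ, δ) → ℝ with μ(0) = 0 such that F(s w, μ(s)) = 0 for all s ∈ (−δ, δ); i.e., a branch of equilibria with symmetry Σ bifurcates from the origin inside Fix(Σ). -/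
/-!
Equivariance makes `F (·, μ)` preserve `Fix(Sig) = ℝ w`, so with a functional `ℓ` satisfying
`ℓ w = 1` we get `F (s • w, μ) = g (s, μ) • w` for the scalar `C²` map `g = ℓ ∘ F (· • w, ·)`.
Since `g (0, μ) = 0`, Hadamard's lemma gives `g (s, μ) = s * h (s, μ)` with `h` of class `C¹` and
`h (0, μ) = ℓ (L μ w)`. The vector `c` is a derivative of a curve in the line `ℝ w`, hence lies on
it, so `∂_μ h (0, 0) = ℓ c ≠ 0` and the implicit function theorem solves `h (s, μ) = 0` near the
origin by a `C¹` branch `μ = μbr s`.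
-/

open Set Filter Topology Metric Function

lemma IsCompact.exists_eventually_forall_norm_le {X Y Z : Type*} [TopologicalSpace X]
    [TopologicalSpace Y] [SeminormedAddCommGroup Z] {f : X → Y → Z} (hf : Continuous (uncurry f))
    {K : Set Y} (hK : IsCompact K) (x₀ : X) :
    ∃ C, ∀ᶠ x in 𝓝 x₀, ∀ y ∈ K, ‖f x y‖ ≤ C := by
  obtain ⟨C, hC⟩ := hK.exists_bound_of_continuousOn
    (hf.comp (Continuous.prodMk_right x₀)).continuousOn
  refine ⟨C + 1, hK.eventually_forall_of_forall_eventually fun y hy => ?_⟩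
  have hlt : ‖f x₀ y‖ < C + 1 := (hC y hy).trans_lt (lt_add_one C)
  exact ((hf.norm.tendsto (x₀, y)).eventually (gt_mem_nhds hlt)).mono fun _ => le_of_lt

section Hadamard

variable {H E : Type*} [NormedAddCommGroup H] [NormedSpace ℝ H]
  [NormedAddCommGroup E] [NormedSpace ℝ E]

theorem contDiff_one_parametric_intervalIntegral {f : H → ℝ → E}
    (hf : ContDiff ℝ 1 (uncurry f)) (a b : ℝ) : ContDiff ℝ 1 fun p => ∫ t in a..b, f p t := by
  set f' : H → ℝ → H →L[ℝ] E := fun p t => fderiv ℝ (uncurry f) (p, t) ∘L .inl ℝ H ℝ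
  have hf' : Continuous (uncurry f') :=
    (hf.continuous_fderiv one_ne_zero).clm_comp continuous_const
  have hderiv (p : H) (t : ℝ) : HasFDerivAt (fun q => f q t) (f' p t) p := by
    have := (hf.differentiable one_ne_zero (p, t)).hasFDerivAt.comp p
      (hasFDerivAt_prodMk_left (𝕜 := ℝ) p t)
    exact this
  have hint (p₀ : H) :
      HasFDerivAt (fun p => ∫ t in a..b, f p t) (∫ t in a..b, f' p₀ t) p₀ := by
    obtain ⟨C, hC⟩ := isCompact_uIcc.exists_eventually_forall_norm_le hf' p₀
    refine intervalIntegral.hasFDerivAt_integral_of_dominated_of_fderiv_le (bound := fun _ => C)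
      hC (.of_forall fun p => ?_) ?_ ?_ (.of_forall fun t ht p hp => hp t (uIoc_subset_uIcc ht))
      intervalIntegrable_const (.of_forall fun t _ p _ => hderiv p t)
    · exact (hf.continuous.comp (Continuous.prodMk_right p)).aestronglyMeasurable
    · exact (hf.continuous.comp (Continuous.prodMk_right p₀)).intervalIntegrable a b
    · exact (hf'.comp (Continuous.prodMk_right p₀)).aestronglyMeasurable
  refine contDiff_one_iff_fderiv.2 ⟨fun p => (hint p).differentiableAt, ?_⟩
  rw [funext fun p => (hint p).fderiv]
  exact intervalIntegral.continuous_parametric_intervalIntegral_of_continuous' hf' a b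

theorem ContDiff.exists_eq_fst_smul [CompleteSpace E] {g : ℝ × H → E} (hg : ContDiff ℝ 2 g)
    (hg0 : ∀ y, g (0, y) = 0) : ∃ h : ℝ × H → E, ContDiff ℝ 1 h ∧ ∀ p, g p = p.1 • h p := by
  set dg : ℝ × H → E := fun q => fderiv ℝ g q (1, 0)
  have hdg : ContDiff ℝ 1 dg := (hg.fderiv_right (by norm_num)).clm_apply contDiff_const
  have hdg_line : ContDiff ℝ 1 fun z : (ℝ × H) × ℝ => dg (z.2 * z.1.1, z.1.2) :=
    hdg.comp (by fun_prop)
  refine ⟨fun p => ∫ t in (0 : ℝ)..1, dg (t * p.1, p.2),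
    contDiff_one_parametric_intervalIntegral hdg_line 0 1, fun ⟨s, y⟩ => ?_⟩
  have hline (t : ℝ) : HasDerivAt (fun t => g (t * s, y)) (s • dg (t * s, y)) t := by
    have := (hg.differentiable (by norm_num) (t * s, y)).hasFDerivAt.comp_hasDerivAt t
      (((hasDerivAt_id t).mul_const s).prodMk (hasDerivAt_const t y))
    simpa [dg, ← map_smul, Function.comp_def] using this
  have hdg_int : IntervalIntegrable (fun t => s • dg (t * s, y)) MeasureTheory.volume 0 1 :=
    (continuous_const.smul (hdg.continuous.comp (by fun_prop))).intervalIntegrable 0 1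
  rw [← intervalIntegral.integral_smul, intervalIntegral.integral_eq_sub_of_hasDerivAt
    (fun t _ => hline t) hdg_int]
  simp [hg0]

end Hadamard

lemma ContinuousLinearMap.isInvertible_of_apply_one_ne_zero {𝕜 : Type*} [Field 𝕜]
    [TopologicalSpace 𝕜] [IsTopologicalRing 𝕜] {f : 𝕜 →L[𝕜] 𝕜} (hf : f 1 ≠ 0) :
    f.IsInvertible := by
  refine .of_inverse (g := (f 1)⁻¹ • .id 𝕜 𝕜) (ext_ring ?_) (ext_ring ?_)
  · simpa using inv_mul_cancel₀ hf
  · simp [hf]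

theorem ContDiff.exists_implicit_branch {h : ℝ × ℝ → ℝ} (hh : ContDiff ℝ 1 h)
    (h00 : h (0, 0) = 0) {a : ℝ} (ha : HasDerivAt (fun μ => h (0, μ)) a 0) (ha0 : a ≠ 0) :
    ∃ δ > 0, ∃ μbr : ℝ → ℝ, ContDiffOn ℝ 1 μbr (Ioo (-δ) δ) ∧ μbr 0 = 0 ∧
      ∀ s ∈ Ioo (-δ) δ, h (s, μbr s) = 0 := by
  have hh₀ : ContDiffAt ℝ 1 h (0, 0) := hh.contDiffAt
  have hinv : (fderiv ℝ h (0, 0) ∘L .inr ℝ ℝ ℝ).IsInvertible := by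
    refine ContinuousLinearMap.isInvertible_of_apply_one_ne_zero ?_
    have := (hh.differentiable one_ne_zero (0, 0)).hasFDerivAt.comp_hasDerivAt 0
      ((hasDerivAt_const (0 : ℝ) (0 : ℝ)).prodMk (hasDerivAt_id 0))
    change fderiv ℝ h (0, 0) (0, 1) ≠ 0
    rwa [← ha.unique this]
  set μbr := hh₀.implicitFunction one_ne_zero hinv
  obtain ⟨δ, hδ, hball⟩ := eventually_nhds_iff_ball.1
    ((hh₀.eventually_apply_implicitFunction one_ne_zero hinv).and
      ((hh₀.contDiffAt_implicitFunction one_ne_zero hinv).eventually (by simp)))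
  simp only [Real.ball_zero_eq_Ioo] at hball
  refine ⟨δ, hδ, μbr, fun s hs => (hball s hs).2.contDiffWithinAt,
    hh₀.implicitFunction_apply_self one_ne_zero hinv, fun s hs => ?_⟩
  rw [(hball s hs).1, h00]

theorem ContDiff.exists_bifurcation_branch {g : ℝ × ℝ → ℝ} (hg : ContDiff ℝ 2 g)
    (hg0 : ∀ μ, g (0, μ) = 0) {k : ℝ → ℝ} (hk : ∀ μ, HasDerivAt (fun s => g (s, μ)) (k μ) 0)
    (hk0 : k 0 = 0) {a : ℝ} (ha : HasDerivAt k a 0) (ha0 : a ≠ 0) :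
    ∃ δ > 0, ∃ μbr : ℝ → ℝ, ContDiffOn ℝ 1 μbr (Ioo (-δ) δ) ∧ μbr 0 = 0 ∧
      ∀ s ∈ Ioo (-δ) δ, g (s, μbr s) = 0 := by
  obtain ⟨h, hh, hgh⟩ := hg.exists_eq_fst_smul hg0
  have hh0 (μ : ℝ) : h (0, μ) = k μ := by
    have hk' : DifferentiableAt ℝ (fun s : ℝ => h (s, μ)) 0 :=
      (hh.differentiable one_ne_zero _).comp _ (by fun_prop)
    have := (hasDerivAt_id' (0 : ℝ)).mul hk'.hasDerivAt
    rw [one_mul, zero_mul, add_zero] at this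
    exact (this.congr_of_eventuallyEq (.of_forall fun s => hgh (s, μ))).unique (hk μ)
  obtain ⟨δ, hδ, μbr, hμC, hμ0, hzero⟩ :=
    hh.exists_implicit_branch (by rw [hh0, hk0]) (by simpa only [hh0] using ha) ha0
  refine ⟨δ, hδ, μbr, hμC, hμ0, fun s hs => ?_⟩
  rw [hgh, hzero s hs, smul_zero]

lemma HasDerivAt.mem_of_forall_mem {𝕜 F : Type*} [NontriviallyNormedField 𝕜]
    [NormedAddCommGroup F] [NormedSpace 𝕜 F] {f : 𝕜 → F} {f' : F} {x : 𝕜}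
    {p : Submodule 𝕜 F} (hp : IsClosed (p : Set F)) (hf : HasDerivAt f f' x)
    (hmem : ∀ y, f y ∈ p) : f' ∈ p := by
  rw [← hf.deriv]
  refine hp.closure_subset_iff.2 ?_ (range_deriv_subset_closure_span_image f dense_univ
    (mem_range_self x))
  exact Submodule.span_le.2 (image_subset_iff.2 fun y _ => hmem y)

lemma eq_smul_of_mem_span_singleton {R M Φ : Type*} [Semiring R] [AddCommMonoid M] [Module R M]
    [FunLike Φ M R] [LinearMapClass Φ R M R] {ℓ : Φ} {w x : M} (hℓ : ℓ w = 1)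
    (hx : x ∈ Submodule.span R {w}) : x = ℓ x • w := by
  obtain ⟨a, rfl⟩ := Submodule.mem_span_singleton.1 hx
  simp [hℓ]

lemma apply_mem_span_of_fixedPoints_eq_span {R V P Γ : Type*} [Semiring R] [AddCommMonoid V]
    [Module R V] [Group Γ] (ρ : Γ →* (V ≃ₗ[R] V)) {F : V → P → V}
    (hequiv : ∀ γ x μ, F (ρ γ x) μ = ρ γ (F x μ)) {Sig : Subgroup Γ} {w : V}
    (hfix : {x : V | ∀ σ ∈ Sig, ρ σ x = x} = Submodule.span R {w}) {x : V}
    (hx : x ∈ Submodule.span R {w}) (μ : P) : F x μ ∈ Submodule.span R {w} := by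
  rw [← SetLike.mem_coe, ← hfix] at hx ⊢
  intro σ hσ
  rw [← hequiv, hx σ hσ]

theorem stmt_13_general {n : ℕ} {Γ : Type*} [Group Γ]
    (ρ : Γ →* ((Fin n → ℝ) ≃ₗ[ℝ] (Fin n → ℝ)))
    (F : (Fin n → ℝ) → ℝ → (Fin n → ℝ))
    (hsmooth : ContDiff ℝ 2 (Function.uncurry F))
    (hequiv : ∀ (γ : Γ) (x : Fin n → ℝ) (μ : ℝ), F (ρ γ x) μ = ρ γ (F x μ))
    (htrivial : ∀ μ : ℝ, F 0 μ = 0)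
    (L : ℝ → ((Fin n → ℝ) →L[ℝ] (Fin n → ℝ)))
    (hLderiv : ∀ μ : ℝ, HasFDerivAt (fun x => F x μ) (L μ) 0)
    (hL0 : L 0 = 0)
    (Sig : Subgroup Γ) (w : Fin n → ℝ) (hw : w ≠ 0)
    (hfix : {x : Fin n → ℝ | ∀ σ ∈ Sig, ρ σ x = x}
      = (Submodule.span ℝ {w} : Submodule ℝ (Fin n → ℝ)))
    (c : Fin n → ℝ) (hcross : HasDerivAt (fun μ : ℝ => L μ w) c 0) (hc : c ≠ 0) :
    ∃ δ > (0 : ℝ), ∃ μbr : ℝ → ℝ,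
      ContDiffOn ℝ 1 μbr (Set.Ioo (-δ) δ) ∧
      μbr 0 = 0 ∧
      ∀ s ∈ Set.Ioo (-δ) δ, F (s • w) (μbr s) = 0 := by
  obtain ⟨i, hwi⟩ : ∃ i, w i ≠ 0 := Function.ne_iff.1 hw
  set ℓ : (Fin n → ℝ) →L[ℝ] ℝ := (w i)⁻¹ • ContinuousLinearMap.proj i
  have hℓw : ℓ w = 1 := by simp [ℓ, hwi]
  have hline : IsClosed (Submodule.span ℝ {w} : Set (Fin n → ℝ)) :=
    Submodule.closed_of_finiteDimensional _
  have hF_line (s μ : ℝ) : F (s • w) μ ∈ Submodule.span ℝ {w} :=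
    apply_mem_span_of_fixedPoints_eq_span ρ hequiv hfix
      (Submodule.smul_mem _ s (Submodule.mem_span_singleton_self w)) μ
  have hF_deriv (μ : ℝ) : HasDerivAt (fun s : ℝ => F (s • w) μ) (L μ w) 0 := by
    have := (zero_smul ℝ w ▸ hLderiv μ).comp_hasDerivAt (0 : ℝ)
      ((hasDerivAt_id (0 : ℝ)).smul_const w)
    simpa [Function.comp_def] using this
  have hc_line : c ∈ Submodule.span ℝ {w} :=
    hcross.mem_of_forall_mem hline fun μ => (hF_deriv μ).mem_of_forall_mem hline (hF_line · μ)
  have hℓc : ℓ c ≠ 0 := fun h0 => hc <| by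
    rw [eq_smul_of_mem_span_singleton hℓw hc_line, h0, zero_smul]
  obtain ⟨δ, hδ, μbr, hμC, hμ0, hzero⟩ :=
    ContDiff.exists_bifurcation_branch (g := fun p => ℓ (F (p.1 • w) p.2))
      (ℓ.contDiff.comp (hsmooth.comp (f := fun p : ℝ × ℝ => (p.1 • w, p.2)) (by fun_prop)))
      (fun μ => by simp [htrivial]) (fun μ => ℓ.hasFDerivAt.comp_hasDerivAt 0 (hF_deriv μ))
      (by simp [hL0]) (ℓ.hasFDerivAt.comp_hasDerivAt 0 hcross) hℓc
  refine ⟨δ, hδ, μbr, hμC, hμ0, fun s hs => ?_⟩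
  rw [eq_smul_of_mem_span_singleton hℓw (hF_line s _), hzero s hs, zero_smul]

/-- Equivariant Branching Lemma, one-dimensional fixed-space version:
for a `Γ`-equivariant `C²` bifurcation problem `F : ℝⁿ × ℝ → ℝⁿ` with `F(0,μ) = 0`,
`DₓF(0,0) = 0`, an axial subgroup `Sig` whose fixed-point subspace is the line
spanned by `w ≠ 0`, and a transversal crossing condition, there is a `C¹` branch
`s ↦ (s w, μ(s))` of equilibria with symmetry `Sig` bifurcating from the origin. -/
theorem stmt_13 {n : ℕ} {Γ : Type*} [Group Γ] [Finite Γ]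
    (ρ : Γ →* ((Fin n → ℝ) ≃ₗ[ℝ] (Fin n → ℝ)))
    (F : (Fin n → ℝ) → ℝ → (Fin n → ℝ))
    (hsmooth : ContDiff ℝ 2 (Function.uncurry F))
    (hequiv : ∀ (γ : Γ) (x : Fin n → ℝ) (μ : ℝ), F (ρ γ x) μ = ρ γ (F x μ))
    (htrivial : ∀ μ : ℝ, F 0 μ = 0)
    (L : ℝ → ((Fin n → ℝ) →L[ℝ] (Fin n → ℝ)))
    (hLderiv : ∀ μ : ℝ, HasFDerivAt (fun x => F x μ) (L μ) 0)
    (hL0 : L 0 = 0)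
    (Sig : Subgroup Γ) (w : Fin n → ℝ) (hw : w ≠ 0)
    (hfix : {x : Fin n → ℝ | ∀ σ ∈ Sig, ρ σ x = x}
      = (Submodule.span ℝ {w} : Submodule ℝ (Fin n → ℝ)))
    (c : Fin n → ℝ) (hcross : HasDerivAt (fun μ : ℝ => L μ w) c 0) (hc : c ≠ 0) :
    ∃ δ > (0 : ℝ), ∃ μbr : ℝ → ℝ,
      ContDiffOn ℝ 1 μbr (Set.Ioo (-δ) δ) ∧
      μbr 0 = 0 ∧
      ∀ s ∈ Set.Ioo (-δ) δ, F (s • w) (μbr s) = 0 :=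
  stmt_13_general ρ F hsmooth hequiv htrivial L hLderiv hL0 Sig w hw hfix c hcross hc
end

section
/- (SO(2)-equivariant Hopf bifurcation / rotating-wave branch.) Let R(φ) denote the 2×2 rotation matrix with columns (cos φ, sin φ) and (−sin φ, cos φ), and let J = R(π/2). Let F : ℝ² × ℝ → ℝ² be twice continuously differentiable and SO(2)-equivariant in the first variable: F(R(φ) x, μ) = R(φ) F(x, μ) for all φ ∈ ℝ, x ∈ ℝ², μ ∈ ℝ. Equivariance implies F(x, μ) = a(|x|², μ) x + b(|x|², μ) J x for scalar C¹ functions a, b; assume a(0, 0) = 0 (eigenvalue real parts vanish at μ = 0), b(0, 0) = ω ≠ 0 (nonzero rotation frequency), and ∂a/∂μ(0, 0) ≠ 0 (transversal eigenvalue crossing). Then there exist δ > 0 and continuously differentiable functions μ : (−δ, δ) → ℝ and Ω : (−δ, δ) → ℝ with μ(0) = 0 and Ω(0) = ω such that, for each s ∈ (0, δ), the curve x_s(t) = R(Ω(s) t) · (s, 0) is a nonconstant periodic solution of the differential equation x' = F(x, μ(s)) with period 2π/|Ω(s)|, and it is a rotating wave: x_s(t + θ/Ω(s)) = R(θ) x_s(t)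 for all θ, t ∈ ℝ. -/
/-!
Since `R(Ωt)' = Ω J R(Ωt)`, the ansatz `x(t) = R(Ωt) (s, 0)` solves
`x' = a(|x|², μ) x + b(|x|², μ) J x` as soon as `a(s², μ) = 0` and `Ω = b(s², μ)`.
As `∂a/∂μ(0, 0) ≠ 0`, the implicit function theorem solves `a(r, μ) = 0` by a `C¹` branch
`μ = g(r)` near `r = 0`; take `μ(s) = g(s²)` and `Ω(s) = b(s², μ(s))`, which stays away from `0`
for small `s` because `Ω(0) = ω ≠ 0`.
-/

open Real

/-- The 2×2 rotation matrix with columns `(cos φ, sin φ)` and `(−sin φ, cos φ)`. -/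
noncomputable def rotMat (φ : ℝ) : Matrix (Fin 2) (Fin 2) ℝ :=
  !![Real.cos φ, -Real.sin φ; Real.sin φ, Real.cos φ]

open Filter Topology Matrix

theorem ContDiffAt.exists_implicitFunction_of_hasDerivAt {a : ℝ → ℝ → ℝ} {r₀ μ₀ c : ℝ}
    {n : WithTop ℕ∞} (ha : ContDiffAt ℝ n (Function.uncurry a) (r₀, μ₀)) (hn : n ≠ 0)
    (hcross : HasDerivAt (a r₀) c μ₀) (hc : c ≠ 0) :
    ∃ g : ℝ → ℝ, ContDiffAt ℝ n g r₀ ∧ g r₀ = μ₀ ∧ ∀ᶠ r in 𝓝 r₀, a r (g r) = a r₀ μ₀ := by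
  have hpartial : HasDerivAt (a r₀)
      ((fderiv ℝ (Function.uncurry a) (r₀, μ₀) ∘L .inr ℝ ℝ ℝ) 1) μ₀ :=
    (ha.differentiableAt hn).hasFDerivAt.comp_hasDerivAt μ₀
      ((hasDerivAt_const μ₀ r₀).prodMk (hasDerivAt_id μ₀))
  have hinv : (fderiv ℝ (Function.uncurry a) (r₀, μ₀) ∘L .inr ℝ ℝ ℝ).IsInvertible :=
    ⟨ContinuousLinearEquiv.unitsEquivAut ℝ (Units.mk0 c hc), ContinuousLinearMap.ext_ring <| by
      simpa using hcross.unique hpartial⟩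
  exact ⟨ha.implicitFunction hn hinv, ha.contDiffAt_implicitFunction hn hinv,
    ha.implicitFunction_apply_self hn hinv, ha.eventually_apply_implicitFunction hn hinv⟩

theorem rotMat_mulVec (φ : ℝ) (v : Fin 2 → ℝ) :
    rotMat φ *ᵥ v = ![cos φ * v 0 - sin φ * v 1, sin φ * v 0 + cos φ * v 1] := by
  ext i; fin_cases i <;> simp [rotMat, dotProduct, Fin.sum_univ_two]; ring

theorem rotMat_zero : rotMat 0 = 1 := by
  ext i j; fin_cases i <;> fin_cases j <;> simp [rotMat]

theorem rotMat_add (α β : ℝ) : rotMat (α + β) = rotMat α * rotMat β := by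
  ext i j; fin_cases i <;> fin_cases j <;>
    simp [rotMat, Matrix.mul_apply, Fin.sum_univ_two, cos_add, sin_add] <;> ring

theorem rotMat_pi : rotMat π = -1 := by
  ext i j; fin_cases i <;> fin_cases j <;> simp [rotMat]

theorem rotMat_periodic : Function.Periodic rotMat (2 * π) := by
  intro φ; simp [rotMat]

theorem rotMat_mul_add_two_pi_div_abs {Ω : ℝ} (hΩ : Ω ≠ 0) (t : ℝ) :
    rotMat (Ω * (t + 2 * π / |Ω|)) = rotMat (Ω * t) := by
  rcases abs_cases Ω with ⟨habs, -⟩ | ⟨habs, -⟩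
  · rw [habs, mul_add, mul_div_cancel₀ _ hΩ, rotMat_periodic]
  · rw [habs, mul_add, div_neg, mul_neg, mul_div_cancel₀ _ hΩ, ← sub_eq_add_neg,
      rotMat_periodic.sub_eq]

theorem rotMat_mul_add_div_mulVec {Ω : ℝ} (hΩ : Ω ≠ 0) (θ t : ℝ) (v : Fin 2 → ℝ) :
    rotMat (Ω * (t + θ / Ω)) *ᵥ v = rotMat θ *ᵥ (rotMat (Ω * t) *ᵥ v) := by
  rw [mul_add, mul_div_cancel₀ _ hΩ, add_comm, rotMat_add, mulVec_mulVec]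

theorem rotMat_pi_mulVec_ne_self {v : Fin 2 → ℝ} (hv : v ≠ 0) : rotMat π *ᵥ v ≠ v := by
  rw [rotMat_pi, neg_mulVec, one_mulVec]
  exact neg_ne_self.mpr hv

theorem normSq_rotMat_mulVec (φ : ℝ) (v : Fin 2 → ℝ) :
    (rotMat φ *ᵥ v) 0 ^ 2 + (rotMat φ *ᵥ v) 1 ^ 2 = v 0 ^ 2 + v 1 ^ 2 := by
  simp only [rotMat_mulVec, cons_val_zero, cons_val_one]
  linear_combination (v 0 ^ 2 + v 1 ^ 2) * sin_sq_add_cos_sq φ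

theorem hasDerivAt_rotMat_mul_mulVec (Ω : ℝ) (v : Fin 2 → ℝ) (t : ℝ) :
    HasDerivAt (fun t => rotMat (Ω * t) *ᵥ v) (Ω • rotMat (π / 2) *ᵥ (rotMat (Ω * t) *ᵥ v)) t := by
  have hlin : HasDerivAt (fun t => Ω * t) Ω t := by simpa using (hasDerivAt_id t).const_mul Ω
  simp only [rotMat_mulVec, cos_pi_div_two, sin_pi_div_two, hasDerivAt_pi, Fin.forall_fin_two,
    cons_val_zero, cons_val_one, Pi.smul_apply, smul_eq_mul]
  constructor
  · convert (hlin.cos.mul_const (v 0)).fun_sub (hlin.sin.mul_const (v 1)) using 1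
    ring
  · convert (hlin.sin.mul_const (v 0)).fun_add (hlin.cos.mul_const (v 1)) using 1
    ring

theorem hasDerivAt_rotMat_mul_mulVec_of_radial {F : (Fin 2 → ℝ) → ℝ → (Fin 2 → ℝ)}
    {a b : ℝ → ℝ → ℝ}
    (hF : ∀ (x : Fin 2 → ℝ) (μ : ℝ),
        F x μ = a (x 0 ^ 2 + x 1 ^ 2) μ • x + b (x 0 ^ 2 + x 1 ^ 2) μ • rotMat (π / 2) *ᵥ x)
    {v : Fin 2 → ℝ} {μ Ω : ℝ} (hav : a (v 0 ^ 2 + v 1 ^ 2) μ = 0)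
    (hbv : b (v 0 ^ 2 + v 1 ^ 2) μ = Ω) (t : ℝ) :
    HasDerivAt (fun t => rotMat (Ω * t) *ᵥ v) (F (rotMat (Ω * t) *ᵥ v) μ) t := by
  rw [hF, normSq_rotMat_mulVec, hav, hbv, zero_smul, zero_add]
  exact hasDerivAt_rotMat_mul_mulVec Ω v t

theorem stmt_14_general
    (F : (Fin 2 → ℝ) → ℝ → (Fin 2 → ℝ))
    (a b : ℝ → ℝ → ℝ)
    (ha : ContDiff ℝ 1 (Function.uncurry a)) (hb : ContDiff ℝ 1 (Function.uncurry b))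
    (hF : ∀ (x : Fin 2 → ℝ) (μ : ℝ),
        F x μ = a (x 0 ^ 2 + x 1 ^ 2) μ • x
          + b (x 0 ^ 2 + x 1 ^ 2) μ • (rotMat (π / 2)).mulVec x)
    (ω : ℝ) (ha00 : a 0 0 = 0) (hb00 : b 0 0 = ω) (hω : ω ≠ 0)
    (c : ℝ) (hcross : HasDerivAt (fun μ : ℝ => a 0 μ) c 0) (hc : c ≠ 0) :
    ∃ δ > (0 : ℝ), ∃ μbr Ω : ℝ → ℝ,
      ContDiffOn ℝ 1 μbr (Set.Ioo (-δ) δ) ∧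
      ContDiffOn ℝ 1 Ω (Set.Ioo (-δ) δ) ∧
      μbr 0 = 0 ∧ Ω 0 = ω ∧
      ∀ s ∈ Set.Ioo (0 : ℝ) δ,
        (∀ t : ℝ, HasDerivAt (fun t : ℝ => (rotMat (Ω s * t)).mulVec ![s, 0])
            (F ((rotMat (Ω s * t)).mulVec ![s, 0]) (μbr s)) t) ∧
        (∀ t : ℝ, (rotMat (Ω s * (t + 2 * π / |Ω s|))).mulVec ![s, 0]
            = (rotMat (Ω s * t)).mulVec ![s, 0]) ∧
        (∃ t₁ t₂ : ℝ, (rotMat (Ω s * t₁)).mulVec ![s, 0]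
            ≠ (rotMat (Ω s * t₂)).mulVec ![s, 0]) ∧
        (∀ θ t : ℝ, (rotMat (Ω s * (t + θ / Ω s))).mulVec ![s, 0]
            = (rotMat θ).mulVec ((rotMat (Ω s * t)).mulVec ![s, 0])) := by
  obtain ⟨g, hg, hg0, hgz⟩ :=
    ha.contDiffAt.exists_implicitFunction_of_hasDerivAt one_ne_zero hcross hc
  set μbr : ℝ → ℝ := fun s => g (s ^ 2)
  set Ω : ℝ → ℝ := fun s => b (s ^ 2) (μbr s)
  have hsq : ContDiffAt ℝ 1 (fun s : ℝ => s ^ 2) 0 := contDiffAt_id.pow 2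
  have hμbr : ContDiffAt ℝ 1 μbr 0 := ContDiffAt.comp 0 (by simpa using hg) hsq
  have hΩ : ContDiffAt ℝ 1 Ω 0 :=
    hb.contDiffAt.comp (f := fun s => (s ^ 2, μbr s)) 0 (hsq.prodMk hμbr)
  have hμbr0 : μbr 0 = 0 := by simp [μbr, hg0]
  have hΩ0 : Ω 0 = ω := by simp [Ω, hμbr0, hb00]
  have hnear : ∀ᶠ s in 𝓝 0, ContDiffAt ℝ 1 μbr s ∧ ContDiffAt ℝ 1 Ω s ∧ Ω s ≠ 0 ∧
      a (s ^ 2) (μbr s) = 0 := by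
    have hsq0 : Tendsto (fun s : ℝ => s ^ 2) (𝓝 0) (𝓝 0) :=
      (continuous_pow 2).tendsto' 0 0 (by simp)
    exact (hμbr.eventually (by simp)).and <| (hΩ.eventually (by simp)).and <|
      (hΩ.continuousAt.eventually_ne (hΩ0 ▸ hω)).and <|
        (hsq0.eventually hgz).mono fun s hs => hs.trans ha00
  obtain ⟨δ, hδ, hball⟩ := Metric.eventually_nhds_iff_ball.mp hnear
  simp only [Real.ball_eq_Ioo, zero_sub, zero_add] at hball
  refine ⟨δ, hδ, μbr, Ω, fun s hs => (hball s hs).1.contDiffWithinAt,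
    fun s hs => (hball s hs).2.1.contDiffWithinAt, hμbr0, hΩ0, fun s hs => ?_⟩
  obtain ⟨-, -, hΩs, has⟩ := hball s ⟨by linarith [hs.1], hs.2⟩
  have hv : (![s, 0] : Fin 2 → ℝ) 0 ^ 2 + (![s, 0] : Fin 2 → ℝ) 1 ^ 2 = s ^ 2 := by simp
  refine ⟨hasDerivAt_rotMat_mul_mulVec_of_radial hF (by rwa [hv]) (by rw [hv]),
    fun t => by rw [rotMat_mul_add_two_pi_div_abs hΩs], ⟨π / Ω s, 0, ?_⟩,
    fun θ t => rotMat_mul_add_div_mulVec hΩs θ t _⟩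
  rw [mul_div_cancel₀ _ hΩs, mul_zero, rotMat_zero, one_mulVec]
  exact rotMat_pi_mulVec_ne_self (by simpa using hs.1.ne')

/-- SO(2)-equivariant Hopf bifurcation / rotating-wave branch:
if `F(x, μ) = a(|x|², μ) x + b(|x|², μ) J x` is SO(2)-equivariant with
`a(0,0) = 0`, `b(0,0) = ω ≠ 0`, and `∂a/∂μ(0,0) ≠ 0`, then there are `C¹` functions
`μ(s)`, `Ω(s)` with `μ(0) = 0`, `Ω(0) = ω` such that for each `0 < s < δ` the curve
`x_s(t) = R(Ω(s) t)·(s,0)` is a nonconstant periodic solution of `x' = F(x, μ(s))`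
with period `2π/|Ω(s)|`, and a rotating wave: `x_s(t + θ/Ω(s)) = R(θ) x_s(t)`. -/
theorem stmt_14
    (F : (Fin 2 → ℝ) → ℝ → (Fin 2 → ℝ))
    (hsmooth : ContDiff ℝ 2 (Function.uncurry F))
    (hequiv : ∀ (φ : ℝ) (x : Fin 2 → ℝ) (μ : ℝ),
        F ((rotMat φ).mulVec x) μ = (rotMat φ).mulVec (F x μ))
    (a b : ℝ → ℝ → ℝ)
    (ha : ContDiff ℝ 1 (Function.uncurry a)) (hb : ContDiff ℝ 1 (Function.uncurry b))
    (hF : ∀ (x : Fin 2 → ℝ) (μ : ℝ),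
        F x μ = a (x 0 ^ 2 + x 1 ^ 2) μ • x
          + b (x 0 ^ 2 + x 1 ^ 2) μ • (rotMat (π / 2)).mulVec x)
    (ω : ℝ) (ha00 : a 0 0 = 0) (hb00 : b 0 0 = ω) (hω : ω ≠ 0)
    (c : ℝ) (hcross : HasDerivAt (fun μ : ℝ => a 0 μ) c 0) (hc : c ≠ 0) :
    ∃ δ > (0 : ℝ), ∃ μbr Ω : ℝ → ℝ,
      ContDiffOn ℝ 1 μbr (Set.Ioo (-δ) δ) ∧
      ContDiffOn ℝ 1 Ω (Set.Ioo (-δ) δ) ∧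
      μbr 0 = 0 ∧ Ω 0 = ω ∧
      ∀ s ∈ Set.Ioo (0 : ℝ) δ,
        (∀ t : ℝ, HasDerivAt (fun t : ℝ => (rotMat (Ω s * t)).mulVec ![s, 0])
            (F ((rotMat (Ω s * t)).mulVec ![s, 0]) (μbr s)) t) ∧
        (∀ t : ℝ, (rotMat (Ω s * (t + 2 * π / |Ω s|))).mulVec ![s, 0]
            = (rotMat (Ω s * t)).mulVec ![s, 0]) ∧
        (∃ t₁ t₂ : ℝ, (rotMat (Ω s * t₁)).mulVec ![s, 0]
            ≠ (rotMat (Ω s * t₂)).mulVec ![s, 0]) ∧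
        (∀ θ t : ℝ, (rotMat (Ω s * (t + θ / Ω s))).mulVec ![s, 0]
            = (rotMat θ).mulVec ((rotMat (Ω s * t)).mulVec ![s, 0])) :=
  stmt_14_general F a b ha hb hF ω ha00 hb00 hω c hcross hc
end
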